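/- The distributional Fourier transform is an isometry for the mild norm: for every tempered distribution σ on ℝᵈ, defining σ̂ by σ̂(f) = σ(f̂) for Schwartz f, one has N(σ̂) = N(σ). More precisely, |σ̂(M_s T_t g₀)| = |σ(M_{−t} T_s g₀)| for all (t,s) ∈ ℝᵈ × ℝᵈ, so the two suprema coincide. -/

import Mathlib

open MeasureTheory

/-- The time-frequency shifted Gaussian window `M_s T_t g₀ (x) = e^{2πi⟨s,x⟩} e^{-π‖x-t‖²}`. -/
noncomputable def mildWindow (d : ℕ) (t s x : EuclideanSpace ℝ (Fin d)) : ℂ :=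
  Complex.exp (2 * (Real.pi : ℂ) * Complex.I * ((inner ℝ s x : ℝ) : ℂ)) *
    Complex.exp (-(Real.pi : ℂ) * ((‖x - t‖ : ℝ) : ℂ) ^ 2)

open Real Complex FourierTransform RealInnerProductSpace in
-- key computation
lemma mildWindow_fourier (d : ℕ) (t s ξ : EuclideanSpace ℝ (Fin d)) :
    𝓕 (fun x => mildWindow d t s x) ξ
      = Complex.exp (2 * (Real.pi : ℂ) * Complex.I * ((inner ℝ t s : ℝ) : ℂ)) *
        mildWindow d s (-t) ξ := by
  set c : ℂ := Complex.exp (2 * (Real.pi : ℂ) * Complex.I * ((inner ℝ s t : ℝ) : ℂ)) with hc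
  set h : EuclideanSpace ℝ (Fin d) → ℂ := fun v =>
    Complex.exp (-(Real.pi : ℂ) * (‖v‖ : ℂ) ^ 2 + 2 * Real.pi * Complex.I * ((inner ℝ s v : ℝ) : ℂ))
    with hh
  have hfun : (fun x => mildWindow d t s x) = fun x => c * (h ∘ fun v => v + (-t)) x := by
    funext x
    simp only [Function.comp_apply, hh, hc, mildWindow, ← Complex.exp_add]
    congr 1
    have : (inner ℝ s (x + -t) : ℝ) = (inner ℝ s x : ℝ) - (inner ℝ s t : ℝ) := by
      rw [inner_add_right, inner_neg_right]; ring
    rw [this]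
    have hx : x + -t = x - t := by abel
    rw [hx]
    push_cast
    ring
  rw [hfun]
  have hsmul : 𝓕 (fun x => c * (h ∘ fun v => v + (-t)) x) ξ
      = c * 𝓕 (h ∘ fun v => v + (-t)) ξ := by
    simp only [Real.fourier_eq, smul_eq_mul]
    rw [← integral_const_mul]
    congr 1
    funext v
    simp [Circle.smul_def]
    ring
  rw [hsmul]
  have htrans := VectorFourier.fourierIntegral_comp_add_right (𝐞) (volume : Measure (EuclideanSpace ℝ (Fin d)))
    (innerₗ (EuclideanSpace ℝ (Fin d))) h (-t)
  have htrans' : 𝓕 (h ∘ fun v => v + (-t)) ξ = 𝐞 ((inner ℝ (-t) ξ : ℝ)) • 𝓕 h ξ := by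
    have := congrFun htrans ξ
    exact this
  rw [htrans']
  have hb : 0 < ((Real.pi : ℂ)).re := by simpa using Real.pi_pos
  have hg := fourier_gaussian_innerProductSpace' (V := EuclideanSpace ℝ (Fin d)) (b := (Real.pi : ℂ)) hb s ξ
  have hgauss : 𝓕 h ξ = Complex.exp (-(Real.pi : ℂ) * (‖s - ξ‖ : ℂ) ^ 2) := by
    rw [hh, hg]
    rw [div_self (by exact_mod_cast Real.pi_ne_zero), Complex.one_cpow, one_mul]
    congr 1
    have hπ : (Real.pi : ℂ) ≠ 0 := by exact_mod_cast Real.pi_ne_zero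
    field_simp
  rw [hgauss]
  simp only [Circle.smul_def, Real.fourierChar_apply, mildWindow, hc]
  rw [inner_neg_left, real_inner_comm s t, norm_sub_rev s ξ, smul_eq_mul,
    ← Complex.exp_add, ← Complex.exp_add, ← Complex.exp_add, ← Complex.exp_add]
  congr 1
  push_cast
  ring

set_option maxHeartbeats 2000000
/-- The distributional Fourier transform `σ̂(f) = σ(𝓕 f)` is an isometry for the mild norm:
`|σ̂(M_s T_t g₀)| = |σ(M_{-t} T_s g₀)|` for all `(t,s)`, and hence the two suprema defining
the mild norms of `σ̂` and `σ` coincide. -/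
theorem fourier_transform_mild_isometry (d : ℕ)
    (σ : SchwartzMap (EuclideanSpace ℝ (Fin d)) ℂ →L[ℂ] ℂ)
    (G : EuclideanSpace ℝ (Fin d) → EuclideanSpace ℝ (Fin d) →
      SchwartzMap (EuclideanSpace ℝ (Fin d)) ℂ)
    (hG : ∀ t s x, G t s x = mildWindow d t s x) :
    (∀ t s, ‖σ (SchwartzMap.fourierTransformCLM ℂ (G t s))‖ = ‖σ (G s (-t))‖) ∧
    (⨆ p : EuclideanSpace ℝ (Fin d) × EuclideanSpace ℝ (Fin d),
        ‖σ (SchwartzMap.fourierTransformCLM ℂ (G p.1 p.2))‖) =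
      ⨆ p : EuclideanSpace ℝ (Fin d) × EuclideanSpace ℝ (Fin d), ‖σ (G p.1 p.2)‖ := by
  have key : ∀ t s, SchwartzMap.fourierTransformCLM ℂ (G t s)
      = Complex.exp (2 * (Real.pi : ℂ) * Complex.I * ((inner ℝ t s : ℝ) : ℂ)) • G s (-t) := by
    intro t s
    ext ξ
    have hfn : ⇑(G t s) = fun x => mildWindow d t s x := funext (hG t s)
    rw [SchwartzMap.fourierTransformCLM_apply, SchwartzMap.fourier_coe, hfn, mildWindow_fourier d t s ξ,
      SchwartzMap.smul_apply, hG s (-t) ξ, smul_eq_mul]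
  have hnorm : ∀ t s, ‖σ (SchwartzMap.fourierTransformCLM ℂ (G t s))‖ = ‖σ (G s (-t))‖ := by
    intro t s
    rw [key t s, ContinuousLinearMap.map_smul, norm_smul]
    have : ‖Complex.exp (2 * (Real.pi : ℂ) * Complex.I * ((inner ℝ t s : ℝ) : ℂ))‖ = 1 := by
      rw [Complex.norm_exp]
      have : (2 * (Real.pi : ℂ) * Complex.I * ((inner ℝ t s : ℝ) : ℂ)).re = 0 := by
        simp [Complex.mul_re, Complex.mul_im]
      rw [this, Real.exp_zero]
    rw [this, one_mul]
  refine ⟨hnorm, ?_⟩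
  have step : (⨆ p : EuclideanSpace ℝ (Fin d) × EuclideanSpace ℝ (Fin d),
      ‖σ (SchwartzMap.fourierTransformCLM ℂ (G p.1 p.2))‖)
      = ⨆ p : EuclideanSpace ℝ (Fin d) × EuclideanSpace ℝ (Fin d), ‖σ (G p.2 (-p.1))‖ :=
    iSup_congr (fun p => hnorm p.1 p.2)
  rw [step]
  have hsurj : Function.Surjective
      (fun p : EuclideanSpace ℝ (Fin d) × EuclideanSpace ℝ (Fin d) => (p.2, -p.1)) :=
    fun q => ⟨(-q.2, q.1), by simp⟩
  exact hsurj.iSup_comp (g := fun p : EuclideanSpace ℝ (Fin d) × EuclideanSpace ℝ (Fin d) =>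
    ‖σ (G p.1 p.2)‖)
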